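/- For the abstaining loss L as a function of the logits, with g = -log p_j the standard cross-entropy on the true class j, the partial derivative with respect to the abstention logit a_{k+1} satisfies ∂L/∂a_{k+1} = p_{k+1} * [ (1 - p_{k+1}) * ( log(1/(1 - p_{k+1})) - g ) + α ]. -/

import Mathlib

/-!
Moving the abstention logit `x` leaves the renormalised distribution `p_j / (1 - p_{k+1})` over
the genuine classes unchanged (both are `exp a_j` over the sum of the other exponentials), and
moves `q = p_{k+1}` along a shifted logistic curve, so `q' = q (1 - q)`. Hence
`L = (1 - q) c + α log (1 / (1 - q))` with `c` constant, `L' = -q (1 - q) c + α q`, and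
`-c = log p_j + log (1 / (1 - q)) = log (1 / (1 - q)) - g`.
-/

open Real Finset Function

noncomputable def softmax {ι : Type*} [Fintype ι] (a : ι → ℝ) (i : ι) : ℝ :=
  exp (a i) / ∑ m, exp (a m)

section Softmax

variable {ι : Type*} [Fintype ι] (a : ι → ℝ)

lemma sum_exp_pos [Nonempty ι] : 0 < ∑ m, exp (a m) :=
  sum_pos (fun _ _ => exp_pos _) univ_nonempty

lemma softmax_pos (i : ι) : 0 < softmax a i :=
  have : Nonempty ι := ⟨i⟩
  div_pos (exp_pos _) (sum_exp_pos a)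

variable [DecidableEq ι]

lemma sum_exp_update (i : ι) (x : ℝ) :
    ∑ m, exp (update a i x m) = exp x + ∑ m ∈ univ.erase i, exp (a m) := by
  rw [← add_sum_erase _ _ (mem_univ i), update_self]
  congr 1
  exact sum_congr rfl fun m hm => by rw [update_of_ne (ne_of_mem_erase hm)]

lemma sum_exp_erase_pos {i j : ι} (hji : j ≠ i) : 0 < ∑ m ∈ univ.erase i, exp (a m) :=
  sum_pos (fun _ _ => exp_pos _) ⟨j, mem_erase.2 ⟨hji, mem_univ j⟩⟩

lemma one_sub_softmax (i : ι) :
    1 - softmax a i = (∑ m ∈ univ.erase i, exp (a m)) / ∑ m, exp (a m) := by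
  have : Nonempty ι := ⟨i⟩
  have hS := (sum_exp_pos a).ne'
  rw [softmax, ← add_sum_erase _ _ (mem_univ i)] at *
  field_simp
  ring

lemma softmax_lt_one {i j : ι} (hji : j ≠ i) : softmax a i < 1 := by
  have : Nonempty ι := ⟨i⟩
  have := div_pos (sum_exp_erase_pos a hji) (sum_exp_pos a)
  rw [← one_sub_softmax] at this
  linarith

lemma softmax_div_one_sub_softmax (i j : ι) :
    softmax a j / (1 - softmax a i) = exp (a j) / ∑ m ∈ univ.erase i, exp (a m) := by
  have : Nonempty ι := ⟨i⟩
  rw [one_sub_softmax, softmax, div_div_div_cancel_right₀ (sum_exp_pos a).ne']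

lemma softmax_update_div_one_sub_softmax_update {i j : ι} (hji : j ≠ i) (x : ℝ) :
    softmax (update a i x) j / (1 - softmax (update a i x) i)
      = softmax a j / (1 - softmax a i) := by
  have hrest : ∑ m ∈ univ.erase i, exp (update a i x m) = ∑ m ∈ univ.erase i, exp (a m) :=
    sum_congr rfl fun m hm => by rw [update_of_ne (ne_of_mem_erase hm)]
  rw [softmax_div_one_sub_softmax, softmax_div_one_sub_softmax, hrest,
    update_of_ne hji]

lemma softmax_update_self_eq_sigmoid {i j : ι} (hji : j ≠ i) (x : ℝ) :
    softmax (update a i x) i = sigmoid (x - log (∑ m ∈ univ.erase i, exp (a m))) := by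
  have hC := sum_exp_erase_pos a hji
  rw [softmax, sum_exp_update, update_self, sigmoid_def, neg_sub, exp_sub, exp_log hC]
  field_simp

lemma hasDerivAt_softmax_update_self {i j : ι} (hji : j ≠ i) (x : ℝ) :
    HasDerivAt (fun y => softmax (update a i y) i)
      (softmax (update a i x) i * (1 - softmax (update a i x) i)) x := by
  simp only [softmax_update_self_eq_sigmoid a hji]
  exact (hasDerivAt_sigmoid _).comp_sub_const _ _

end Softmax

lemma HasDerivAt.abstain_loss {q : ℝ → ℝ} {q' x : ℝ} (c α : ℝ) (hq : HasDerivAt q q' x)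
    (hq1 : q x ≠ 1) :
    HasDerivAt (fun y => (1 - q y) * c + α * Real.log (1 / (1 - q y)))
      (-q' * c + α * (q' / (1 - q x))) x := by
  have hlog := (hq.const_sub 1).log (sub_ne_zero.2 hq1.symm)
  simp only [one_div, Real.log_inv]
  exact (((hq.const_sub 1).mul_const c).add (hlog.neg.const_mul α)).congr_deriv (by ring)

theorem abstain_loss_deriv_abstain_logit_general
    (k : ℕ) (a : Fin (k + 1) → ℝ) (j : Fin (k + 1))
    (hj : (j : ℕ) < k) (α : ℝ) :
    deriv (fun x : ℝ =>
      (fun (b : Fin (k + 1) → ℝ) =>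
        (fun (p : Fin (k + 1) → ℝ) =>
          (1 - p (Fin.last k)) * (-(Real.log (p j / (1 - p (Fin.last k)))))
            + α * Real.log (1 / (1 - p (Fin.last k))))
        (fun i => Real.exp (b i) / ∑ m, Real.exp (b m)))
      (Function.update a (Fin.last k) x)) (a (Fin.last k))
    = (fun (p : Fin (k + 1) → ℝ) =>
        p (Fin.last k) *
          ((1 - p (Fin.last k)) *
              (Real.log (1 / (1 - p (Fin.last k))) - (-(Real.log (p j)))) + α))
      (fun i => Real.exp (a i) / ∑ m, Real.exp (a m)) := by
  have hjl : j ≠ Fin.last k := Fin.ne_last_of_lt (b := Fin.last k) hj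
  set q := fun x => softmax (update a (Fin.last k) x) (Fin.last k)
  change deriv (fun x => (1 - q x) * -log (softmax (update a (Fin.last k) x) j / (1 - q x))
      + α * log (1 / (1 - q x))) (a (Fin.last k))
    = softmax a (Fin.last k) * ((1 - softmax a (Fin.last k)) *
        (log (1 / (1 - softmax a (Fin.last k))) - -log (softmax a j)) + α)
  simp only [q, softmax_update_div_one_sub_softmax_update a hjl]
  have hp1 : 0 < 1 - softmax a (Fin.last k) := sub_pos.2 (softmax_lt_one a hjl)
  rw [((hasDerivAt_softmax_update_self a hjl _).abstain_loss _ α (softmax_lt_one _ hjl).ne).deriv,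
    update_eq_self, log_div (softmax_pos a j).ne' hp1.ne', one_div, log_inv]
  field_simp
  ring

/-- Formula for the partial derivative of the abstaining loss with respect to
the abstention logit `a (k+1)`. -/
theorem abstain_loss_deriv_abstain_logit
    (k : ℕ) (hk : 1 ≤ k) (a : Fin (k + 1) → ℝ) (j : Fin (k + 1))
    (hj : (j : ℕ) < k) (α : ℝ) :
    deriv (fun x : ℝ =>
      (fun (b : Fin (k + 1) → ℝ) =>
        (fun (p : Fin (k + 1) → ℝ) =>
          (1 - p (Fin.last k)) * (-(Real.log (p j / (1 - p (Fin.last k)))))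
            + α * Real.log (1 / (1 - p (Fin.last k))))
        (fun i => Real.exp (b i) / ∑ m, Real.exp (b m)))
      (Function.update a (Fin.last k) x)) (a (Fin.last k))
    = (fun (p : Fin (k + 1) → ℝ) =>
        p (Fin.last k) *
          ((1 - p (Fin.last k)) *
              (Real.log (1 / (1 - p (Fin.last k))) - (-(Real.log (p j)))) + α))
      (fun i => Real.exp (a i) / ∑ m, Real.exp (a m)) :=
  abstain_loss_deriv_abstain_logit_general k a j hj α
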